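/- arXiv:1907.09114 — 4 statements merged into one kernel-verified Lean document; each statement's English description precedes it below -/
import Mathlib

section
/- Every formula φ of the basic epistemic language is valid on the class of all multi-agent belief models if and only if φ is valid on the class of all multi-relational Kripke models (i.e., the belief base semantics and the Kripke semantics for the multimodal logic Kₙ have the same validities). -/
/-- Explicit-belief language L₀ over atoms ℕ and agents `Fin n`. -/
inductive Form0 (n : ℕ) : Type
  | atom : ℕ → Form0 n
  | neg : Form0 n → Form0 n
  | conj : Form0 n → Form0 n → Form0 n
  | tri : Fin n → Form0 n → Form0 n

/-- Multi-agent belief base. -/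
structure MBB (n : ℕ) where
  base : Fin n → Set (Form0 n)
  state : Set ℕ

/-- Satisfaction of L₀-formulas at an MBB. -/
def sat0 {n : ℕ} (B : MBB n) : Form0 n → Prop
  | .atom p => p ∈ B.state
  | .neg a => ¬ sat0 B a
  | .conj a b => sat0 B a ∧ sat0 B b
  | .tri i a => a ∈ B.base i

/-- A correct MBB: every explicit belief is true at it. -/
def MBB.Correct {n : ℕ} (B : MBB n) : Prop := ∀ i : Fin n, ∀ a ∈ B.base i, sat0 B a

/-- Epistemic alternative relation: B Rᵢ B' iff B' satisfies everything in agent i's base at B. -/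
def EpiAlt {n : ℕ} (i : Fin n) (B B' : MBB n) : Prop := ∀ a ∈ B.base i, sat0 B' a

/-- Basic epistemic language L_EL. -/
inductive FormEL (n : ℕ) : Type
  | atom : ℕ → FormEL n
  | neg : FormEL n → FormEL n
  | conj : FormEL n → FormEL n → FormEL n
  | box : Fin n → FormEL n → FormEL n

/-- Satisfaction of L_EL at an MBM (B, C). -/
def satEL {n : ℕ} (C : Set (MBB n)) (B : MBB n) : FormEL n → Prop
  | .atom p => p ∈ B.state
  | .neg a => ¬ satEL C B a
  | .conj a b => satEL C B a ∧ satEL C B b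
  | .box i a => ∀ B' ∈ C, EpiAlt i B B' → satEL C B' a

/-- Multi-relational Kripke model. -/
structure Kripke (n : ℕ) where
  W : Type
  rel : Fin n → W → W → Prop
  val : ℕ → W → Prop

/-- Kripke satisfaction for L_EL. -/
def satK {n : ℕ} (M : Kripke n) (w : M.W) : FormEL n → Prop
  | .atom p => M.val p w
  | .neg a => ¬ satK M w a
  | .conj a b => satK M w a ∧ satK M w b
  | .box i a => ∀ v, M.rel i w v → satK M v a

/-! Every MBM `(B, C)` is a Kripke model whose worlds are belief bases, related by `EpiAlt`
restricted to `C`. Conversely, given a Kripke model and a finite subformula-closed set `Γ`,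
label every world `v` with a fresh atom naming its `Γ`-type (finitely many types, so a
natural number suffices). The belief base of `v` makes agent `i` believe `¬name` for every
type not realised among the `i`-successors of `v`; its epistemic alternatives inside the
context are then exactly the worlds whose type is realised by an `i`-successor of `v`, i.e.
the filtration of the Kripke model through `Γ`, which preserves the truth of `Γ`. -/

namespace FormEL

variable {n : ℕ}

def subformulas : FormEL n → List (FormEL n)
  | .atom p => [.atom p]
  | .neg a => .neg a :: subformulas a
  | .conj a b => .conj a b :: (subformulas a ++ subformulas b)
  | .box i a => .box i a :: subformulas a

theorem mem_subformulas_self (ψ : FormEL n) : ψ ∈ ψ.subformulas := by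
  cases ψ <;> simp [subformulas]

theorem exists_atom_lt (Γ : List (FormEL n)) : ∃ N, ∀ p, .atom p ∈ Γ → p < N := by
  obtain ⟨N, hN⟩ := (Γ.finite_toSet.preimage (fun _ _ _ _ h => FormEL.atom.inj h)).bddAbove
  exact ⟨N + 1, fun p hp => Nat.lt_succ_of_le (hN hp)⟩

end FormEL

namespace Kripke

variable {n : ℕ}

def ofContext (C : Set (MBB n)) : Kripke n where
  W := MBB n
  rel i B B' := B' ∈ C ∧ EpiAlt i B B'
  val p B := p ∈ B.state

theorem satK_ofContext_iff (C : Set (MBB n)) (ψ : FormEL n) (B : MBB n) :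
    satK (ofContext C) B ψ ↔ satEL C B ψ := by
  induction ψ generalizing B with
  | atom p => rfl
  | neg a ih => exact not_congr (ih B)
  | conj a b iha ihb => exact and_congr (iha B) (ihb B)
  | box i a ih =>
    exact ⟨fun h B' hB' hR => (ih B').mp (h B' ⟨hB', hR⟩),
      fun h B' hR => (ih B').mpr (h B' hR.1 hR.2)⟩

section Filtration

variable (M : Kripke n) (Γ : List (FormEL n))

open Classical in
noncomputable def type (v : M.W) : List Bool := Γ.map fun ψ => decide (satK M v ψ)

/-- The atom `N + encode S` names the type `S`; it lies above the atoms `< N` of `Γ`. -/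
noncomputable def beliefBase (N : ℕ) (v : M.W) : MBB n where
  base i := (fun S => .neg (.atom (N + Encodable.encode S))) ''
    (M.type Γ '' {u | M.rel i v u})ᶜ
  state := {p | p < N ∧ M.val p v} ∪ {N + Encodable.encode (M.type Γ v)}

variable {M Γ}

theorem satK_iff_of_type_eq {u v : M.W} (h : M.type Γ u = M.type Γ v) {ψ : FormEL n}
    (hψ : ψ ∈ Γ) : satK M u ψ ↔ satK M v ψ := by
  simpa using List.map_inj_left.mp h ψ hψ

theorem add_encode_mem_state_iff {N : ℕ} {S : List Bool} {v : M.W} :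
    N + Encodable.encode S ∈ (M.beliefBase Γ N v).state ↔ S = M.type Γ v := by
  simp only [beliefBase, Set.mem_union, Set.mem_ofPred_eq, Set.mem_singleton_iff]
  constructor
  · rintro (⟨hlt, -⟩ | h)
    · omega
    · exact Encodable.encode_injective (by omega)
  · rintro rfl
    exact Or.inr rfl

theorem epiAlt_beliefBase_iff {N : ℕ} {i : Fin n} {v u : M.W} :
    EpiAlt i (M.beliefBase Γ N v) (M.beliefBase Γ N u) ↔
      M.type Γ u ∈ M.type Γ '' {w | M.rel i v w} := by
  constructor
  · intro h
    by_contra hu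
    exact h _ ⟨_, hu, rfl⟩ (add_encode_mem_state_iff.mpr rfl)
  · rintro hu _ ⟨S, hS, rfl⟩ hmem
    exact hS (add_encode_mem_state_iff.mp hmem ▸ hu)

theorem satEL_beliefBase_iff {N : ℕ} (hN : ∀ p, .atom p ∈ Γ → p < N) (ψ : FormEL n)
    (hψ : ψ.subformulas ⊆ Γ) (v : M.W) :
    satEL (Set.range (M.beliefBase Γ N)) (M.beliefBase Γ N v) ψ ↔ satK M v ψ := by
  induction ψ generalizing v with
  | atom p =>
    have hp : p < N := hN p (hψ (FormEL.mem_subformulas_self _))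
    simp only [satEL, satK, beliefBase, Set.mem_union, Set.mem_ofPred_eq,
      Set.mem_singleton_iff]
    constructor
    · rintro (⟨-, h⟩ | h)
      · exact h
      · omega
    · exact fun h => Or.inl ⟨hp, h⟩
  | neg a ih =>
    simp only [FormEL.subformulas, List.cons_subset] at hψ
    exact not_congr (ih hψ.2 v)
  | conj a b iha ihb =>
    simp only [FormEL.subformulas, List.cons_subset, List.append_subset] at hψ
    exact and_congr (iha hψ.2.1 v) (ihb hψ.2.2 v)
  | box i a ih =>
    simp only [FormEL.subformulas, List.cons_subset] at hψ
    have ha : a ∈ Γ := hψ.2 (FormEL.mem_subformulas_self a)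
    simp only [satEL, satK, Set.forall_mem_range, epiAlt_beliefBase_iff, ih hψ.2]
    constructor
    · exact fun h u hu => h u ⟨u, hu, rfl⟩
    · rintro h u ⟨w, hw, hwu⟩
      exact (satK_iff_of_type_eq hwu ha).mp (h w hw)

end Filtration

end Kripke

/-- the belief base semantics and the Kripke semantics have the same
L_EL-validities. -/
theorem stmt3 (n : ℕ) (φ : FormEL n) :
    (∀ (B : MBB n) (C : Set (MBB n)), satEL C B φ) ↔
      (∀ (M : Kripke n) (w : M.W), satK M w φ) := by
  constructor
  · intro hEL M w
    obtain ⟨N, hN⟩ := FormEL.exists_atom_lt φ.subformulas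
    exact (Kripke.satEL_beliefBase_iff hN φ (List.Subset.refl _) w).mp (hEL _ _)
  · intro hK B C
    exact (Kripke.satK_ofContext_iff C φ B).mp (hK (Kripke.ofContext C) B)
end

section
/- Let B be the MBB with all belief bases empty (the MBM with maximal general uncertainty relative to the universal context U). Then for any agent i and any formula φ of the basic epistemic language: φ is satisfiable on the class of MBMs if and only if (B, U) ⊨ ◇ᵢφ, where ◇ᵢφ := ¬□ᵢ¬φ. -/
/-!
In the universal context the agent-`i` alternatives of an MBB are the models of its `i`-th
belief base. A finite set `F` of MBBs is exactly the set of models of its `L₀`-theory, since any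
MBB outside `F` is refuted by a finite disjunction of literals, one separating it from each member
of `F`. So an MBB whose `i`-th base is the theory of a finite set `F i` has exactly `F i` as its
`i`-alternatives in the universal context. Unravelling an arbitrary MBM to the modal depth of `φ`,
keeping only the atoms of `φ`, leaves finitely many MBBs at each level; hence each level can be
realised this way, and `φ` keeps its truth value. With all bases empty every MBB is an
alternative, so `◇ᵢφ` holds at `B` exactly when `φ` is satisfiable.
-/

namespace Form0

variable {n : ℕ}

def falsum : Form0 n := .conj (.atom 0) (.neg (.atom 0))

def disj (a b : Form0 n) : Form0 n := .neg (.conj (.neg a) (.neg b))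

@[simp]
lemma sat0_falsum (X : MBB n) : ¬ sat0 X falsum := by
  simp [falsum, sat0]

@[simp]
lemma sat0_disj (X : MBB n) (a b : Form0 n) : sat0 X (disj a b) ↔ sat0 X a ∨ sat0 X b := by
  simp only [disj, sat0]
  tauto

end Form0

namespace MBB

variable {n : ℕ}

lemma eq_of_forall_sat0_iff {X Y : MBB n} (h : ∀ a, sat0 X a ↔ sat0 Y a) : X = Y := by
  obtain ⟨bX, sX⟩ := X
  obtain ⟨bY, sY⟩ := Y
  have hbase : bX = bY := funext fun i => Set.ext fun a => h (.tri i a)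
  have hstate : sX = sY := Set.ext fun p => h (.atom p)
  rw [hbase, hstate]

lemma exists_sat0_of_ne {X Y : MBB n} (hXY : X ≠ Y) : ∃ a, sat0 X a ∧ ¬ sat0 Y a := by
  by_contra! h
  refine hXY (eq_of_forall_sat0_iff fun a => ⟨h a, fun hY => ?_⟩)
  by_contra hX
  exact h (.neg a) hX hY

def theory (F : Set (MBB n)) : Set (Form0 n) := {a | ∀ X ∈ F, sat0 X a}

lemma exists_mem_theory_not_sat0 {F : Set (MBB n)} (hF : F.Finite) {Y : MBB n} (hY : Y ∉ F) :
    ∃ a ∈ theory F, ¬ sat0 Y a := by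
  induction F, hF using Set.Finite.induction_on with
  | empty => exact ⟨.falsum, fun _ h => h.elim, Form0.sat0_falsum Y⟩
  | @insert X F _ _ ih =>
    obtain ⟨a, ha, hYa⟩ := ih fun h => hY (Set.mem_insert_of_mem X h)
    obtain ⟨b, hXb, hYb⟩ := exists_sat0_of_ne fun h : X = Y => hY (h ▸ Set.mem_insert X F)
    refine ⟨.disj b a, ?_, by simp [hYa, hYb]⟩
    rintro Z (rfl | hZ)
    · simp [hXb]
    · simp [ha Z hZ]

lemma forall_mem_theory_sat0_iff {F : Set (MBB n)} (hF : F.Finite) {Y : MBB n} :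
    (∀ a ∈ theory F, sat0 Y a) ↔ Y ∈ F := by
  refine ⟨fun h => ?_, fun hY a ha => ha Y hY⟩
  by_contra hY
  obtain ⟨a, ha, hYa⟩ := exists_mem_theory_not_sat0 hF hY
  exact hYa (h a ha)

def ofAlts (s : Set ℕ) (F : Fin n → Set (MBB n)) : MBB n := ⟨fun i => theory (F i), s⟩

lemma epiAlt_ofAlts_iff {s : Set ℕ} {F : Fin n → Set (MBB n)} {i : Fin n} (hF : (F i).Finite)
    {Y : MBB n} : EpiAlt i (ofAlts s F) Y ↔ Y ∈ F i :=
  forall_mem_theory_sat0_iff hF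

lemma finite_setOf_ofAlts {A : Set ℕ} {R : Set (MBB n)} (hA : A.Finite) (hR : R.Finite) :
    {X | ∃ s ⊆ A, ∃ F : Fin n → Set (MBB n), (∀ i, F i ⊆ R) ∧ X = ofAlts s F}.Finite := by
  refine ((hA.finite_subsets.prod (Set.Finite.pi' fun _ => hR.finite_subsets)).image
    fun p => ofAlts p.1 p.2).subset ?_
  rintro _ ⟨s, hs, F, hF, rfl⟩
  exact ⟨(s, F), ⟨hs, hF⟩, rfl⟩

end MBB

namespace FormEL

variable {n : ℕ}

def atoms : FormEL n → Finset ℕ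
  | .atom p => {p}
  | .neg a => a.atoms
  | .conj a b => a.atoms ∪ b.atoms
  | .box _ a => a.atoms

def depth : FormEL n → ℕ
  | .atom _ => 0
  | .neg a => a.depth
  | .conj a b => max a.depth b.depth
  | .box _ a => a.depth + 1

end FormEL

section Unravel

variable {n : ℕ} (C : Set (MBB n)) (A : Set ℕ)

def unravel : ℕ → MBB n → MBB n
  | 0, w => MBB.ofAlts (w.state ∩ A) fun _ => ∅
  | k + 1, w => MBB.ofAlts (w.state ∩ A) fun i => unravel k '' {v ∈ C | EpiAlt i w v}

variable {C A}

lemma unravel_state (k : ℕ) (w : MBB n) : (unravel C A k w).state = w.state ∩ A := by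
  cases k <;> rfl

lemma finite_range_unravel (hA : A.Finite) (k : ℕ) : (Set.range (unravel C A k)).Finite := by
  induction k with
  | zero =>
    refine (MBB.finite_setOf_ofAlts hA Set.finite_empty).subset ?_
    rintro _ ⟨w, rfl⟩
    exact ⟨_, Set.inter_subset_right, _, fun _ => subset_rfl, rfl⟩
  | succ k ih =>
    refine (MBB.finite_setOf_ofAlts hA ih).subset ?_
    rintro _ ⟨w, rfl⟩
    exact ⟨_, Set.inter_subset_right, _, fun _ => Set.image_subset_range _ _, rfl⟩

lemma epiAlt_unravel_succ_iff (hA : A.Finite) {k : ℕ} {i : Fin n} {w Y : MBB n} :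
    EpiAlt i (unravel C A (k + 1) w) Y ↔ Y ∈ unravel C A k '' {v ∈ C | EpiAlt i w v} :=
  MBB.epiAlt_ofAlts_iff ((finite_range_unravel hA k).subset (Set.image_subset_range _ _))

lemma satEL_univ_unravel_iff (hA : A.Finite) {ψ : FormEL n} (hψ : ↑ψ.atoms ⊆ A) {k : ℕ}
    (hk : ψ.depth ≤ k) (w : MBB n) : satEL Set.univ (unravel C A k w) ψ ↔ satEL C w ψ := by
  induction ψ generalizing k w with
  | atom p =>
    have hp : p ∈ A := hψ (by simp [FormEL.atoms])
    simp [satEL, unravel_state, hp]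
  | neg a ih => exact not_congr (ih hψ hk w)
  | conj a b iha ihb =>
    simp only [FormEL.atoms, Finset.coe_union, Set.union_subset_iff] at hψ
    simp only [FormEL.depth, max_le_iff] at hk
    exact and_congr (iha hψ.1 hk.1 w) (ihb hψ.2 hk.2 w)
  | box i a ih =>
    obtain _ | k := k
    · simp [FormEL.depth] at hk
    simp only [satEL, Set.mem_univ, true_implies, epiAlt_unravel_succ_iff hA,
      Set.forall_mem_image, Set.mem_ofPred_eq, and_imp]
    exact forall₃_congr fun v _ _ => ih hψ (Nat.le_of_succ_le_succ hk) v

end Unravel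

lemma exists_satEL_univ_of_satEL {n : ℕ} {φ : FormEL n} {C : Set (MBB n)} {w : MBB n}
    (h : satEL C w φ) : ∃ X, satEL Set.univ X φ :=
  ⟨unravel C φ.atoms φ.depth w,
    (satEL_univ_unravel_iff φ.atoms.finite_toSet subset_rfl le_rfl w).2 h⟩

lemma epiAlt_of_base_eq_empty {n : ℕ} {B : MBB n} {i : Fin n} (h : B.base i = ∅) (Y : MBB n) :
    EpiAlt i B Y := by
  simp [EpiAlt, h]

/-- with B the MBB with all bases empty (maximal general uncertainty) and U the
universal context, φ is satisfiable on the class of MBMs iff (B, U) ⊨ ◇ᵢφ. -/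
theorem stmt7 (n : ℕ) (i : Fin n) (φ : FormEL n) (B : MBB n) (h : ∀ j : Fin n, B.base j = ∅) :
    (∃ (B' : MBB n) (C' : Set (MBB n)), satEL C' B' φ) ↔
      satEL Set.univ B (.neg (.box i (.neg φ))) := by
  simp only [satEL, Set.mem_univ, true_implies, not_forall, not_not]
  constructor
  · rintro ⟨B', C', hφ⟩
    obtain ⟨X, hX⟩ := exists_satEL_univ_of_satEL hφ
    exact ⟨X, epiAlt_of_base_eq_empty (h i) X, hX⟩
  · rintro ⟨X, -, hX⟩
    exact ⟨X, Set.univ, hX⟩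
end

section
/- The set of validities of the extended epistemic language (with both □ᵢ and the 'believing at most' operators ⊠ᵢ) relative to the universal context strictly contains the set of its validities relative to the class of all multi-agent belief models. In particular, for any finite disjoint sets X, Y ⊆ PROP, the formula E(⋀_{p∈X} p ∧ ⋀_{q∈Y} ¬q), where Uψ := □ᵢψ ∧ ⊠ᵢψ and Eψ := ¬U¬ψ, is valid relative to the universal context but not valid on the class of all MBMs. -/
/-- Extended epistemic language L_EEL with □ᵢ and the "believing at most" operator ⊠ᵢ. -/
inductive FormEEL (n : ℕ) : Type
  | atom : ℕ → FormEEL n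
  | neg : FormEEL n → FormEEL n
  | conj : FormEEL n → FormEEL n → FormEEL n
  | box : Fin n → FormEEL n → FormEEL n
  | boxm : Fin n → FormEEL n → FormEEL n

/-- Satisfaction of L_EEL at an MBM (B, C). -/
def satEEL {n : ℕ} (C : Set (MBB n)) (B : MBB n) : FormEEL n → Prop
  | .atom p => p ∈ B.state
  | .neg a => ¬ satEEL C B a
  | .conj a b => satEEL C B a ∧ satEEL C B b
  | .box i a => ∀ B' ∈ C, EpiAlt i B B' → satEEL C B' a
  | .boxm i a => ∀ B' ∈ C, ¬ EpiAlt i B B' → satEEL C B' a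

/-- Universal modality Uψ := □ᵢψ ∧ ⊠ᵢψ. -/
def Uf {n : ℕ} (i : Fin n) (a : FormEEL n) : FormEEL n := .conj (.box i a) (.boxm i a)

/-- Eψ := ¬U¬ψ. -/
def Ef {n : ℕ} (i : Fin n) (a : FormEEL n) : FormEEL n := .neg (Uf i (.neg a))

def conjLE {n : ℕ} : List (FormEEL n) → FormEEL n
  | [] => .neg (.conj (.atom 0) (.neg (.atom 0)))
  | a :: l => .conj a (conjLE l)

/-- E(⋀_{p∈X} p ∧ ⋀_{q∈Y} ¬q). -/
def chiF {n : ℕ} (i : Fin n) (X Y : Finset ℕ) : FormEEL n :=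
  Ef i (.conj (conjLE ((X.sort (· ≤ ·)).map .atom))
              (conjLE ((Y.sort (· ≤ ·)).map (fun q => .neg (.atom q)))))


lemma satEEL_conjLE {n : ℕ} (C : Set (MBB n)) (B : MBB n) (l : List (FormEEL n)) :
    satEEL C B (conjLE l) ↔ ∀ a ∈ l, satEEL C B a := by
  induction l with
  | nil => simp [conjLE, satEEL]
  | cons a l ih => simp [conjLE, satEEL, ih]

/-- the L_EEL-validities relative to the universal context strictly contain those
relative to all MBMs; in particular E(⋀_{p∈X} p ∧ ⋀_{q∈Y} ¬q) witnesses the gap. -/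
theorem stmt8 (n : ℕ) (i : Fin n) (X Y : Finset ℕ) (hXY : Disjoint X Y) :
    ({φ : FormEEL n | ∀ (B : MBB n) (C : Set (MBB n)), satEEL C B φ} ⊂
        {φ : FormEEL n | ∀ B : MBB n, satEEL Set.univ B φ}) ∧
      (∀ B : MBB n, satEEL Set.univ B (chiF i X Y)) ∧
      ¬ (∀ (B : MBB n) (C : Set (MBB n)), satEEL C B (chiF i X Y)) := by
    classical
  -- the inner formula of chiF
  set ψ : FormEEL n := .conj (conjLE ((X.sort (· ≤ ·)).map .atom))
      (conjLE ((Y.sort (· ≤ ·)).map (fun q => .neg (.atom q)))) with hψ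
  -- witness MBB with state = X
  have hwit : ∀ C : Set (MBB n), satEEL C ⟨fun _ => ∅, ↑X⟩ ψ := by
    intro C
    constructor
    · rw [satEEL_conjLE]
      intro a ha
      simp only [List.mem_map] at ha
      obtain ⟨p, hp, rfl⟩ := ha
      simpa [satEEL] using (Finset.mem_sort (α := ℕ) (· ≤ ·)).1 hp
    · rw [satEEL_conjLE]
      intro a ha
      simp only [List.mem_map] at ha
      obtain ⟨q, hq, rfl⟩ := ha
      have hqY : q ∈ Y := (Finset.mem_sort (α := ℕ) (· ≤ ·)).1 hq
      have : q ∉ X := fun hqX => (Finset.disjoint_left.mp hXY hqX) hqY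
      simpa [satEEL] using this
  have huniv : ∀ B : MBB n, satEEL Set.univ B (chiF i X Y) := by
    intro B
    intro h
    obtain ⟨hbox, hboxm⟩ := h
    by_cases hE : EpiAlt i B ⟨fun _ => ∅, ↑X⟩
    · exact hbox ⟨fun _ => ∅, ↑X⟩ (Set.mem_univ _) hE (hwit _)
    · exact hboxm ⟨fun _ => ∅, ↑X⟩ (Set.mem_univ _) hE (hwit _)
  have hnot : ¬ (∀ (B : MBB n) (C : Set (MBB n)), satEEL C B (chiF i X Y)) := by
    intro h
    have := h ⟨fun _ => ∅, ∅⟩ ∅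
    exact this ⟨fun B' hB' => absurd hB' (Set.notMem_empty _),
                fun B' hB' => absurd hB' (Set.notMem_empty _)⟩
  refine ⟨⟨fun φ hφ B => hφ B Set.univ, ?_⟩, huniv, hnot⟩
  intro hsub
  exact hnot fun B C => hsub huniv B C
end

section
/- Every pointed multi-relational Kripke model can be simulated in the belief base semantics: given a finite Kripke model M = (W, ⇒₁,…,⇒ₙ, V) and w ∈ W, and an injection name : W → PROP avoiding the atoms of a given formula φ, define the context C = { B^v : v ∈ W } where agent i's base at B^v is the singleton { ⋁_{u : v ⇒ᵢ u} name(u) } and the state of B^v is (V(v) ∩ PROP(φ)) ∪ {name(v)}. Then for the given φ of the basic epistemic language, (B^w, C) ⊨ φ if and only if (M, w) ⊨ φ. -/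
/-- Atoms occurring in an L_EL formula. -/
def atomsEL {n : ℕ} : FormEL n → Finset ℕ
  | .atom p => {p}
  | .neg a => atomsEL a
  | .conj a b => atomsEL a ∪ atomsEL b
  | .box _ a => atomsEL a

def orF0 {n : ℕ} (a b : Form0 n) : Form0 n := .neg (.conj (.neg a) (.neg b))

/-- Disjunction of a list of L₀ formulas (⊥ for the empty list). -/
def orL0 {n : ℕ} : List (Form0 n) → Form0 n
  | [] => .conj (.atom 0) (.neg (.atom 0))
  | a :: l => orF0 a (orL0 l)

attribute [local instance] Classical.propDecidable

/-- The MBB B^v simulating world v: agent i's base is the singleton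
{ ⋁_{u : v ⇒ᵢ u} name(u) } and the state is (V(v) ∩ PROP(φ)) ∪ {name v}. -/
noncomputable def simB {n : ℕ} (M : Kripke n) [Fintype M.W] (name : M.W → ℕ)
    (A : Finset ℕ) (v : M.W) : MBB n :=
  { base := fun i =>
      { orL0 (((Finset.univ.filter (fun u => M.rel i v u)).toList).map
          (fun u => Form0.atom (name u))) },
    state := { p | p ∈ A ∧ M.val p v } ∪ { name v } }

/-!
A world `v` is encoded by the base `B^v`, at which the only true name is `name v`: names are
injective and avoid the atoms of `φ`. Hence the disjunction of the names of the `i`-successors of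
`w` holds at `B^v` iff `w ⇒ᵢ v`, i.e. the alternative relation on `C` is the Kripke relation, and on
the atoms of `φ` the state of `B^v` is the valuation at `v`. An induction on `φ` finishes.
-/

lemma sat0_orL0 {n : ℕ} (B : MBB n) (l : List (Form0 n)) :
    sat0 B (orL0 l) ↔ ∃ a ∈ l, sat0 B a := by
  induction l with
  | nil => simp [orL0, sat0]
  | cons a l ih =>
    simp only [orL0, orF0, sat0, ih, List.mem_cons, exists_eq_or_imp, not_and_or, not_not]

section Simulation

variable {n : ℕ} (M : Kripke n) [Fintype M.W] {name : M.W → ℕ} {A : Finset ℕ}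

lemma mem_simB_state_iff_of_mem {p : ℕ} (hA : ∀ v : M.W, name v ∉ A) (hp : p ∈ A) (v : M.W) :
    p ∈ (simB M name A v).state ↔ M.val p v := by
  constructor
  · rintro (⟨-, h⟩ | rfl)
    · exact h
    · exact absurd hp (hA v)
  · exact fun h => Or.inl ⟨hp, h⟩

lemma name_mem_simB_state_iff (hinj : Function.Injective name) (hA : ∀ v : M.W, name v ∉ A)
    (u v : M.W) : name u ∈ (simB M name A v).state ↔ u = v := by
  constructor
  · rintro (⟨hu, -⟩ | h)
    · exact absurd hu (hA u)
    · exact hinj h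
  · rintro rfl
    exact Or.inr rfl

lemma epiAlt_simB_iff (hinj : Function.Injective name) (hA : ∀ v : M.W, name v ∉ A)
    (i : Fin n) (w v : M.W) :
    EpiAlt i (simB M name A w) (simB M name A v) ↔ M.rel i w v := by
  refine forall_eq.trans ?_
  simp only [sat0_orL0, List.mem_map, Finset.mem_toList, Finset.mem_filter, Finset.mem_univ,
    true_and, exists_exists_and_eq_and, sat0, name_mem_simB_state_iff M hinj hA, exists_eq_right]

theorem satEL_simB_iff_satK (hinj : Function.Injective name) (hA : ∀ v : M.W, name v ∉ A)
    (φ : FormEL n) (hφ : atomsEL φ ⊆ A) (w : M.W) :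
    satEL { B : MBB n | ∃ v : M.W, B = simB M name A v } (simB M name A w) φ ↔ satK M w φ := by
  induction φ generalizing w with
  | atom p => exact mem_simB_state_iff_of_mem M hA (hφ (Finset.mem_singleton_self p)) w
  | neg a ih => exact not_congr (ih hφ w)
  | conj a b iha ihb =>
    exact and_congr (iha (Finset.union_subset_left hφ) w) (ihb (Finset.union_subset_right hφ) w)
  | box i a ih =>
    simp only [satEL, satK, Set.mem_ofPred_eq, forall_exists_index, forall_eq_apply_imp_iff,
      epiAlt_simB_iff M hinj hA, ih hφ]

end Simulation

/-- every pointed finite Kripke model is simulated in the belief base semantics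
via the context C = { B^v : v ∈ W }. -/
theorem stmt17 (n : ℕ) (M : Kripke n) [Fintype M.W] (w : M.W) (φ : FormEL n)
    (name : M.W → ℕ) (hinj : Function.Injective name)
    (havoid : ∀ v : M.W, name v ∉ atomsEL φ) :
    satEL { B : MBB n | ∃ v : M.W, B = simB M name (atomsEL φ) v }
        (simB M name (atomsEL φ) w) φ ↔
      satK M w φ :=
  satEL_simB_iff_satK M hinj havoid φ subset_rfl w
end
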